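/- Every set in D_0 is the range of a polynomial in finitely many variables with nonnegative integer coefficients evaluated over all tuples of natural numbers; specifically, for every S ∈ D_0 there exist k ∈ ℕ and a polynomial F ∈ ℕ[x_1,...,x_k] with S = {F(n_1,...,n_k) : n_1,...,n_k ∈ ℕ}. -/
import Mathlib

open Pointwise
open scoped Classical

/-- The additive Kleene star `S* = {s_1 + … + s_k : k ≥ 0, s_i ∈ S}`. -/
def addStar (S : Set ℕ) : Set ℕ :=
  {n | ∃ l : List ℕ, (∀ x ∈ l, x ∈ S) ∧ l.sum = n}

/-- `D0`: the minimal class of subsets of `ℕ` containing all singletons and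
closed under sumset and additive Kleene star. -/
inductive D0 : Set ℕ → Prop
  | single (b : ℕ) : D0 {b}
  | add {S T : Set ℕ} : D0 S → D0 T → D0 (S + T)
  | star {S : Set ℕ} : D0 S → D0 (addStar S)

lemma addStar_eq_closure (S : Set ℕ) :
    addStar S = (AddSubmonoid.closure S : Set ℕ) := by
  ext n
  constructor
  · rintro ⟨l, hl, rfl⟩
    exact list_sum_mem (fun x hx => AddSubmonoid.subset_closure (hl x hx))
  · intro hn
    exact AddSubmonoid.exists_list_of_mem_closure hn

lemma sum_single_mul {k : ℕ} (j : Fin k) (c : ℕ) (g : Fin k → ℕ) :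
    ∑ i, (Pi.single j c : Fin k → ℕ) i * g i = c * g j := by
  rw [Finset.sum_eq_single j]
  · simp
  · intro i _ hij
    rw [Pi.single_eq_of_ne hij, zero_mul]
  · simp

lemma addSubmonoid_range (M : AddSubmonoid ℕ) :
    ∃ (k : ℕ) (g : Fin k → ℕ),
      (M : Set ℕ) = Set.range (fun n : Fin k → ℕ => ∑ i, n i * g i) := by
  by_cases h : ∃ a ∈ M, a ≠ 0
  · obtain ⟨a, haM, ha0⟩ := h
    have hapos : 0 < a := Nat.pos_of_ne_zero ha0
    refine ⟨a + 1, fun i => if hi : (i : ℕ) < a then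
        (if h2 : ∃ x, x ∈ M ∧ x % a = (i : ℕ) then Nat.find h2 else 0) else a, ?_⟩
    have hgM : ∀ i : Fin (a + 1),
        (if hi : (i : ℕ) < a then
          (if h2 : ∃ x, x ∈ M ∧ x % a = (i : ℕ) then Nat.find h2 else 0) else a) ∈ M := by
      intro i
      split_ifs with hi h2
      · exact (Nat.find_spec h2).1
      · exact M.zero_mem
      · exact haM
    ext m
    simp only [Set.mem_range, SetLike.mem_coe]
    constructor
    · intro hm
      have hr : m % a < a := Nat.mod_lt _ hapos
      have h2 : ∃ x, x ∈ M ∧ x % a = m % a := ⟨m, hm, rfl⟩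
      set b := Nat.find h2 with hbdef
      obtain ⟨hbM, hbmod⟩ := Nat.find_spec h2
      have hble : b ≤ m := Nat.find_min' h2 ⟨hm, rfl⟩
      have hdvd : a ∣ m - b := by
        have : b ≡ m [MOD a] := by unfold Nat.ModEq; rw [hbmod]
        exact (Nat.modEq_iff_dvd' hble).mp this
      obtain ⟨t, ht⟩ := hdvd
      have hmeq : m = b + t * a := by rw [mul_comm]; omega
      set j : Fin (a + 1) := ⟨m % a, by omega⟩ with hjdef
      refine ⟨Pi.single j 1 + Pi.single (Fin.last a) t, ?_⟩
      have hjne : j ≠ Fin.last a := by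
        simp [hjdef, Fin.ext_iff, Fin.last]; omega
      simp only [Pi.add_apply, add_mul, Finset.sum_add_distrib]
      rw [sum_single_mul, sum_single_mul]
      have hgj : (if hi : ((j : Fin (a+1)) : ℕ) < a then
          (if h2' : ∃ x, x ∈ M ∧ x % a = ((j : Fin (a+1)) : ℕ) then Nat.find h2' else 0)
          else a) = b := by
        rw [dif_pos (show ((j : Fin (a+1)) : ℕ) < a from hr)]
        rw [dif_pos (show ∃ x, x ∈ M ∧ x % a = ((j : Fin (a+1)) : ℕ) from ⟨m, hm, rfl⟩)]
      have hgl : (if hi : ((Fin.last a : Fin (a+1)) : ℕ) < a then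
          (if h2' : ∃ x, x ∈ M ∧ x % a = ((Fin.last a : Fin (a+1)) : ℕ) then Nat.find h2' else 0)
          else a) = a := by
        rw [dif_neg]; simp [Fin.last]
      rw [hgj, hgl, one_mul]
      omega
    · rintro ⟨n, rfl⟩
      refine AddSubmonoid.sum_mem M (fun i _ => ?_)
      have := AddSubmonoid.nsmul_mem M (hgM i) (n i)
      simpa [nsmul_eq_mul] using this
  · push_neg at h
    refine ⟨0, fun i => 0, ?_⟩
    ext m
    simp only [Set.mem_range, SetLike.mem_coe, Finset.univ_eq_empty, Finset.sum_empty]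
    constructor
    · intro hm
      exact ⟨fun i => i.elim0, (h m hm).symm⟩
    · rintro ⟨_, rfl⟩
      exact M.zero_mem

lemma linear_range (k : ℕ) (g : Fin k → ℕ) :
    ∃ F : MvPolynomial (Fin k) ℕ,
      ∀ m : Fin k → ℕ, MvPolynomial.eval m F = ∑ i, m i * g i := by
  refine ⟨∑ i, MvPolynomial.C (g i) * MvPolynomial.X i, fun m => ?_⟩
  simp [mul_comm]

theorem D0_polynomial_range (S : Set ℕ) (hS : D0 S) :
    ∃ (k : ℕ) (F : MvPolynomial (Fin k) ℕ),
      S = Set.range (fun m : Fin k → ℕ => MvPolynomial.eval m F) := by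
  induction hS with
  | single b =>
    refine ⟨0, MvPolynomial.C b, ?_⟩
    ext n
    simp [eq_comm]
  | add hS hT ihS ihT =>
    obtain ⟨k, F, rfl⟩ := ihS
    obtain ⟨l, G, rfl⟩ := ihT
    refine ⟨k + l, MvPolynomial.rename (Fin.castAdd l) F +
      MvPolynomial.rename (Fin.natAdd k) G, ?_⟩
    ext n
    constructor
    · rintro ⟨s, ⟨u, rfl⟩, t, ⟨v, rfl⟩, rfl⟩
      refine ⟨Fin.addCases u v, ?_⟩
      have hc : (Fin.addCases u v : Fin (k+l) → ℕ) ∘ Fin.castAdd l = u := by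
        funext i; simp
      have hd : (Fin.addCases u v : Fin (k+l) → ℕ) ∘ Fin.natAdd k = v := by
        funext i; simp
      simp only [map_add, MvPolynomial.eval_rename, hc, hd]
    · rintro ⟨m, rfl⟩
      simp only [map_add]
      rw [MvPolynomial.eval_rename, MvPolynomial.eval_rename]
      exact Set.add_mem_add ⟨_, rfl⟩ ⟨_, rfl⟩
  | star hS ih =>
    obtain ⟨k, g, hkg⟩ := addSubmonoid_range (AddSubmonoid.closure _)
    obtain ⟨F, hF⟩ := linear_range k g
    refine ⟨k, F, ?_⟩
    rw [addStar_eq_closure, hkg]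
    ext n
    simp only [Set.mem_range]
    exact ⟨fun ⟨m, hm⟩ => ⟨m, by rw [hF]; exact hm⟩, fun ⟨m, hm⟩ => ⟨m, by rw [← hF]; exact hm⟩⟩
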